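/- arXiv:1204.3830 — 4 statements merged into one kernel-verified Lean document; each statement's English description precedes it below -/
import Mathlib

section
/- Every configuration of the 9-puzzle can be transformed into any other configuration via legal synchronous cycle-rotation moves; i.e., the reachability relation on configurations of 9 labeled robots on the 3×3 grid graph, where each move rotates all robots on one or more vertex-disjoint cycles of the grid, has a single equivalence class. -/
/-- The `n × n` grid graph: vertices `Fin n × Fin n`, edges between vertices at
`L₁`-distance `1`. -/
def gridGraph (n : ℕ) : SimpleGraph (Fin n × Fin n) :=
  SimpleGraph.fromRel fun a b => Nat.dist a.1.1 b.1.1 + Nat.dist a.2.1 b.2.1 = 1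

/-- A legal single-step move of the fully occupied graph `G`: a permutation `σ` of the
vertices such that every robot stays put or moves along an edge, and no two robots swap
along an edge (no head-on collision).  Equivalently (since `σ` is a bijection), `σ`
synchronously rotates the robots along a collection of vertex-disjoint cycles of `G`
(of length at least 3) and fixes all other robots. -/
def LegalMove {V : Type*} (G : SimpleGraph V) (σ : Equiv.Perm V) : Prop :=
  (∀ v, σ v = v ∨ G.Adj v (σ v)) ∧ ∀ v, σ v ≠ v → σ (σ v) ≠ v

/-- One legal move between configurations (bijections from robots to vertices). -/
def Step {R V : Type*} (G : SimpleGraph V) (c c' : R ≃ V) : Prop :=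
  ∃ σ : Equiv.Perm V, LegalMove G σ ∧ c' = c.trans σ

/-!
Legal moves are closed under inversion, so the configurations reachable from `c` are exactly
the `c.trans π` with `π` in the subgroup generated by the legal moves, and it suffices to show
that this subgroup is the whole symmetric group on the nine vertices. The product of the
rotations of the outer 8-cycle and of the bottom 6-cycle is a 9-cycle, and the product of the
rotations of the bottom and top 6-cycles differs from the outer rotation by a single
transposition of two vertices consecutive on that 9-cycle. A full cycle together with an
adjacent transposition generates the symmetric group.
-/

open Equiv Equiv.Perm Relation

section LegalMoves

variable {R V : Type*} {G : SimpleGraph V}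

instance [Fintype V] [DecidableEq V] [DecidableRel G.Adj] (σ : Perm V) :
    Decidable (LegalMove G σ) := by
  unfold LegalMove; infer_instance

theorem LegalMove.inv {σ : Perm V} (h : LegalMove G σ) : LegalMove G σ⁻¹ := by
  obtain ⟨hadj, hswap⟩ := h
  refine ⟨fun v => ?_, fun v hv hback => ?_⟩
  · rcases hadj (σ⁻¹ v) with hfix | hmove
    · left
      simpa using (congrArg (⇑σ⁻¹) hfix).symm
    · right
      simpa using hmove.symm
  · have hσv : σ v = σ⁻¹ v := by simpa using (congrArg σ hback).symm
    exact hswap v (hσv ▸ hv) (by simp [hσv])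

def legalMoveGroup (G : SimpleGraph V) : Subgroup (Perm V) :=
  Subgroup.closure {σ | LegalMove G σ}

theorem reflTransGen_step_trans_of_mem_legalMoveGroup {π : Perm V}
    (hπ : π ∈ legalMoveGroup G) (c : R ≃ V) : ReflTransGen (Step G) c (c.trans π) := by
  induction hπ using Subgroup.closure_induction'' generalizing c with
  | mem σ hσ => exact .single ⟨σ, hσ, rfl⟩
  | inv_mem σ hσ => exact .single ⟨σ⁻¹, LegalMove.inv hσ, rfl⟩
  | one => exact .refl
  | mul σ τ _ _ hσ hτ =>
    rw [Perm.mul_def, ← trans_assoc]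
    exact (hτ c).trans (hσ (c.trans τ))

theorem reflTransGen_step_of_legalMoveGroup_eq_top (h : legalMoveGroup G = ⊤) (c c' : R ≃ V) :
    ReflTransGen (Step G) c c' := by
  have hreach := reflTransGen_step_trans_of_mem_legalMoveGroup (π := c.symm.trans c')
    (h ▸ Subgroup.mem_top _) c
  rwa [← trans_assoc, self_trans_symm, refl_trans] at hreach

end LegalMoves

instance (n : ℕ) : DecidableRel (gridGraph n).Adj := fun _ _ => by
  unfold gridGraph; rw [SimpleGraph.fromRel_adj]; infer_instance

namespace NinePuzzle

def outerRotation : Perm (Fin 3 × Fin 3) :=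
  [(0, 0), (0, 1), (0, 2), (1, 2), (2, 2), (2, 1), (2, 0), (1, 0)].formPerm

def topRotation : Perm (Fin 3 × Fin 3) :=
  [(0, 0), (0, 1), (0, 2), (1, 2), (1, 1), (1, 0)].formPerm

def bottomRotation : Perm (Fin 3 × Fin 3) :=
  [(1, 0), (1, 1), (1, 2), (2, 2), (2, 1), (2, 0)].formPerm

theorem legalMove_outerRotation : LegalMove (gridGraph 3) outerRotation := by decide

theorem legalMove_topRotation : LegalMove (gridGraph 3) topRotation := by decide

theorem legalMove_bottomRotation : LegalMove (gridGraph 3) bottomRotation := by decide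

theorem outerRotation_mul_bottomRotation : outerRotation * bottomRotation =
    [(0, 0), (0, 1), (0, 2), (1, 2), (2, 1), (1, 0), (1, 1), (2, 2), (2, 0)].formPerm := by
  decide

theorem isCycle_outerRotation_mul_bottomRotation : (outerRotation * bottomRotation).IsCycle := by
  rw [outerRotation_mul_bottomRotation]
  exact List.isCycle_formPerm (by decide) (by decide)

theorem support_outerRotation_mul_bottomRotation :
    (outerRotation * bottomRotation).support = Finset.univ := by
  decide

theorem bottomRotation_mul_topRotation :
    bottomRotation * topRotation = outerRotation * swap (0, 2) (1, 2) := by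
  decide

theorem legalMoveGroup_gridGraph_three : legalMoveGroup (gridGraph 3) = ⊤ := by
  have outer_mem : outerRotation ∈ legalMoveGroup (gridGraph 3) :=
    Subgroup.subset_closure legalMove_outerRotation
  have top_mem : topRotation ∈ legalMoveGroup (gridGraph 3) :=
    Subgroup.subset_closure legalMove_topRotation
  have bottom_mem : bottomRotation ∈ legalMoveGroup (gridGraph 3) :=
    Subgroup.subset_closure legalMove_bottomRotation
  have hswap : swap (0, 2) (1, 2) = outerRotation⁻¹ * (bottomRotation * topRotation) := by
    rw [bottomRotation_mul_topRotation, inv_mul_cancel_left]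
  have hadj : (outerRotation * bottomRotation) (0, 2) = (1, 2) := by decide
  rw [eq_top_iff, ← closure_cycle_adjacent_swap isCycle_outerRotation_mul_bottomRotation
    support_outerRotation_mul_bottomRotation (0, 2), Subgroup.closure_le, hadj]
  rintro σ (rfl | rfl)
  · exact mul_mem outer_mem bottom_mem
  · rw [hswap]
    exact mul_mem (inv_mem outer_mem) (mul_mem bottom_mem top_mem)

end NinePuzzle

/-- All configurations of the 9-puzzle are connected via legal moves: any configuration of
9 labeled robots on the 3×3 grid graph can be transformed into any other by a sequence of
synchronous rotations along vertex-disjoint cycles. -/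
theorem stmt4 (c c' : Fin 9 ≃ Fin 3 × Fin 3) :
    Relation.ReflTransGen (Step (gridGraph 3)) c c' :=
  reflTransGen_step_of_legalMoveGroup_eq_top NinePuzzle.legalMoveGroup_gridGraph_three c c'
end

section
/- In the n²-puzzle, every legal move that displaces at least one robot displaces at least four robots; equivalently, no robot can move unless at least three other robots move in the same time step. -/
lemma parity_flip {n : ℕ} {a b : Fin n × Fin n} (h : (gridGraph n).Adj a b) :
    (a.1.1 + a.2.1) % 2 ≠ (b.1.1 + b.2.1) % 2 := by
  obtain ⟨-, h | h⟩ := h <;> · simp only [Nat.dist] at h; omega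

/-- In the `n²`-puzzle, any legal single-step move that displaces at least one robot
displaces at least four robots (no robot can move unless at least three others move in
the same time step). -/
theorem stmt6 (n : ℕ) (σ : Equiv.Perm (Fin n × Fin n))
    (h : LegalMove (gridGraph n) σ) (hmoves : ∃ v, σ v ≠ v) :
    4 ≤ σ.support.card := by
  classical
  set S := σ.support with hS
  have hmem : ∀ v, v ∈ S ↔ σ v ≠ v := fun v => Equiv.Perm.mem_support
  have hflip : ∀ v ∈ S, (v.1.1 + v.2.1) % 2 ≠ ((σ v).1.1 + (σ v).2.1) % 2 := by
    intro v hv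
    rcases h.1 v with h0 | hadj
    · exact absurd h0 ((hmem v).1 hv)
    · exact parity_flip hadj
  have hstab : ∀ v ∈ S, σ v ∈ S := by
    intro v hv
    rw [hmem] at hv ⊢
    intro heq
    exact hv (σ.injective heq)
  set E := S.filter (fun v => (v.1.1 + v.2.1) % 2 = 0) with hE
  set O := S.filter (fun v => ¬ (v.1.1 + v.2.1) % 2 = 0) with hO
  -- σ gives a bijection E ≃ O
  have hEO : E.card = O.card := by
    apply Finset.card_bij (fun v _ => σ v)
    · intro v hv
      simp only [hE, Finset.mem_filter] at hv
      simp only [hO, Finset.mem_filter]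
      refine ⟨hstab v hv.1, ?_⟩
      have := hflip v hv.1
      omega
    · intro a ha b hb hab
      exact σ.injective hab
    · intro w hw
      simp only [hO, Finset.mem_filter] at hw
      refine ⟨σ.symm w, ?_, by simp⟩
      have hw' : σ.symm w ∈ S := by
        rw [hmem]
        intro heq
        have : σ (σ.symm w) = σ.symm w := by rw [heq]
        rw [Equiv.apply_symm_apply] at this
        have hfix : σ w = w := by nth_rewrite 1 [this]; exact σ.apply_symm_apply w
        exact (hmem w).1 hw.1 hfix
      simp only [hE, Finset.mem_filter]
      refine ⟨hw', ?_⟩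
      have := hflip _ hw'
      rw [Equiv.apply_symm_apply] at this
      omega
  have hsplit : E.card + O.card = S.card := Finset.card_filter_add_card_filter_not _
  -- support has at least 3 elements
  obtain ⟨v, hv⟩ := hmoves
  have hv1 : v ∈ S := (hmem v).2 hv
  have hv2 : σ v ∈ S := hstab v hv1
  have hv3 : σ (σ v) ∈ S := hstab _ hv2
  have hne12 : v ≠ σ v := fun e => hv e.symm
  have hne23 : σ v ≠ σ (σ v) := fun e => ((hmem _).1 hv2) e.symm
  have hne13 : v ≠ σ (σ v) := fun e => h.2 v hv e.symm
  have h3 : 3 ≤ S.card := by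
    have : ({v, σ v, σ (σ v)} : Finset (Fin n × Fin n)).card = 3 := by
      rw [Finset.card_insert_of_notMem (by simp [hne12, hne13]),
        Finset.card_insert_of_notMem (by simp [hne23]), Finset.card_singleton]
    calc 3 = ({v, σ v, σ (σ v)} : Finset (Fin n × Fin n)).card := this.symm
      _ ≤ S.card := Finset.card_le_card (by
        intro x hx
        simp only [Finset.mem_insert, Finset.mem_singleton] at hx
        rcases hx with rfl | rfl | rfl <;> assumption)
  omega
end

section
/- In the time-expanded network N' with unit capacities, any two unit flows belonging to a feasible integer multiflow are vertex-disjoint. -/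
/-- Feasibility of a path set for an MPP instance `(G, R, x_I, x_G)`. -/
def Feasible {V : Type*} (G : SimpleGraph V) {n : ℕ} (xI xG : Fin n → V)
    (p : Fin n → ℕ → V) (k : Fin n → ℕ) : Prop :=
  (∀ i, p i 0 = xI i) ∧
  (∀ i t, k i ≤ t → p i t = xG i) ∧
  (∀ i t, (∀ s, t ≤ s → p i s = xG i) → k i ≤ t) ∧
  (∀ i t, p i t = p i (t + 1) ∨ G.Adj (p i t) (p i (t + 1))) ∧
  (∀ i j, i ≠ j → ∀ t, p i t ≠ p j t) ∧
  (∀ i j, i ≠ j → ∀ t, ¬(p i t = p j (t + 1) ∧ p i (t + 1) = p j t))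

/-- The makespan `T_P = max_i k_i^min`. -/
def makespan {n : ℕ} (k : Fin n → ℕ) : ℕ := Finset.univ.sup k

/-- Vertices of the time-expanded network `N'` built from a graph on `V`:
`plain v t` is the copy `v(t)`, `prime v t` is the copy `v(t)'`, and `mid1 e t`,
`mid2 e t` are the two middle vertices of the head-on-collision-preventing gadget placed
on the (undirected) edge `e` between time layers `t` and `t+1`. -/
inductive TEV (V : Type*) : Type _
  | plain : V → ℕ → TEV V
  | prime : V → ℕ → TEV V
  | mid1 : Sym2 V → ℕ → TEV V
  | mid2 : Sym2 V → ℕ → TEV V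

/-- The arcs (all of unit capacity) of the time-expanded network with horizon `T`:
the "hold" arcs `v(t) → v(t)'` and `v(t)' → v(t+1)`, and for each edge `{u,v}` of `G` and
each `t < T` the 5-arc gadget `u(t)',v(t)' → mid1 → mid2 → u(t+1),v(t+1)`, whose unit-capacity
middle arc prevents two robots from traversing the edge simultaneously. -/
inductive Arc {V : Type*} (G : SimpleGraph V) (T : ℕ) : TEV V → TEV V → Prop
  | blue (v : V) (t : ℕ) : t ≤ T → Arc G T (.plain v t) (.prime v t)
  | green (v : V) (t : ℕ) : t < T → Arc G T (.prime v t) (.plain v (t + 1))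
  | gadgetIn (u v : V) (t : ℕ) : G.Adj u v → t < T → Arc G T (.prime u t) (.mid1 s(u, v) t)
  | gadgetMid (e : Sym2 V) (t : ℕ) : e ∈ G.edgeSet → t < T → Arc G T (.mid1 e t) (.mid2 e t)
  | gadgetOut (u v : V) (t : ℕ) : G.Adj u v → t < T → Arc G T (.mid2 s(u, v) t) (.plain u (t + 1))

/-- An integer maximum multiflow of value `n` on the time-expanded network: one unit flow per
robot (commodity), supported on the arcs, with total flow through each arc at most its unit
capacity, flow conservation away from each commodity's source `x_I(r_i)(0)` and sink
`x_G(r_i)(T)'`, and each commodity shipping exactly one unit from its source to its sink. -/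
def IsMultiflow {V : Type*} (G : SimpleGraph V) (T : ℕ) {n : ℕ} (xI xG : Fin n → V)
    (f : Fin n → TEV V → TEV V → ℕ) : Prop :=
  (∀ i x y, f i x y ≠ 0 → Arc G T x y) ∧
  (∀ x y, (∑ i, f i x y) ≤ 1) ∧
  (∀ i x, x ≠ TEV.plain (xI i) 0 → x ≠ TEV.prime (xG i) T →
      (∑ᶠ y, f i y x) = ∑ᶠ y, f i x y) ∧
  (∀ i, (∑ᶠ y, f i (TEV.plain (xI i) 0) y) = 1 ∧
        (∑ᶠ y, f i y (TEV.plain (xI i) 0)) = 0 ∧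
        (∑ᶠ y, f i (TEV.prime (xG i) T) y) = 0 ∧
        (∑ᶠ y, f i y (TEV.prime (xG i) T)) = 1)

/-!
Every vertex `x` of `N'` lies on a unit-capacity arc `keyArc x = (a, b)` such that every arc
leaving `a` ends at `b` and every arc entering `b` starts at `a`: the hold arc `v(t) → v(t)'`
for the copies of `v`, the middle arc of the gadget for its two inner vertices. Since `a` is
never a sink and `b` never a source, flow conservation forces every commodity passing through
`x` to use `(a, b)`, and the unit capacity of that arc admits only one commodity.
-/

def keyArc {V : Type*} : TEV V → TEV V × TEV V
  | .plain v t => (.plain v t, .prime v t)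
  | .prime v t => (.plain v t, .prime v t)
  | .mid1 e t => (.mid1 e t, .mid2 e t)
  | .mid2 e t => (.mid1 e t, .mid2 e t)

namespace keyArc

variable {V : Type*}

lemma fst_eq_or_snd_eq (x : TEV V) : (keyArc x).1 = x ∨ (keyArc x).2 = x := by
  cases x <;> simp [keyArc]

lemma fst_ne_prime (x : TEV V) (v : V) (t : ℕ) : (keyArc x).1 ≠ .prime v t := by
  cases x <;> simp [keyArc]

lemma snd_ne_plain (x : TEV V) (v : V) (t : ℕ) : (keyArc x).2 ≠ .plain v t := by
  cases x <;> simp [keyArc]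

end keyArc

namespace Arc

variable {V : Type*} {G : SimpleGraph V} {T : ℕ}

lemma eq_keyArc_snd {x y : TEV V} (h : Arc G T (keyArc x).1 y) : y = (keyArc x).2 := by
  cases x <;> simp only [keyArc] at h ⊢ <;> cases h <;> rfl

lemma eq_keyArc_fst {x y : TEV V} (h : Arc G T y (keyArc x).2) : y = (keyArc x).1 := by
  cases x <;> simp only [keyArc] at h ⊢ <;> cases h <;> rfl

end Arc

namespace IsMultiflow

variable {V : Type*} {G : SimpleGraph V} {T n : ℕ} {xI xG : Fin n → V}
  {f : Fin n → TEV V → TEV V → ℕ}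

lemma outflow_ne_zero_of_inflow_ne_zero (hf : IsMultiflow G T xI xG f) {r : Fin n}
    {x : TEV V} (hsink : x ≠ .prime (xG r) T) (hin : (∑ᶠ y, f r y x) ≠ 0) :
    (∑ᶠ y, f r x y) ≠ 0 := by
  by_cases hsrc : x = .plain (xI r) 0
  · subst hsrc
    exact absurd (hf.2.2.2 r).2.1 hin
  · rwa [← hf.2.2.1 r x hsrc hsink]

lemma inflow_ne_zero_of_outflow_ne_zero (hf : IsMultiflow G T xI xG f) {r : Fin n}
    {x : TEV V} (hsrc : x ≠ .plain (xI r) 0) (hout : (∑ᶠ y, f r x y) ≠ 0) :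
    (∑ᶠ y, f r y x) ≠ 0 := by
  by_cases hsink : x = .prime (xG r) T
  · subst hsink
    exact absurd (hf.2.2.2 r).2.2.1 hout
  · rwa [hf.2.2.1 r x hsrc hsink]

lemma keyArc_ne_zero_of_outflow_ne_zero (hf : IsMultiflow G T xI xG f) {r : Fin n}
    {x : TEV V} (hout : (∑ᶠ y, f r (keyArc x).1 y) ≠ 0) :
    f r (keyArc x).1 (keyArc x).2 ≠ 0 := by
  by_contra! hkey
  refine hout (finsum_eq_zero_of_forall_eq_zero fun y => ?_)
  by_contra hy
  exact hy (Arc.eq_keyArc_snd (hf.1 r _ y hy) ▸ hkey)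

lemma keyArc_ne_zero_of_inflow_ne_zero (hf : IsMultiflow G T xI xG f) {r : Fin n}
    {x : TEV V} (hin : (∑ᶠ y, f r y (keyArc x).2) ≠ 0) :
    f r (keyArc x).1 (keyArc x).2 ≠ 0 := by
  by_contra! hkey
  refine hin (finsum_eq_zero_of_forall_eq_zero fun y => ?_)
  by_contra hy
  exact hy (Arc.eq_keyArc_fst (hf.1 r y _ hy) ▸ hkey)

lemma keyArc_ne_zero (hf : IsMultiflow G T xI xG f) {r : Fin n} {x : TEV V}
    (hx : ((∑ᶠ y, f r y x) + ∑ᶠ y, f r x y) ≠ 0) :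
    f r (keyArc x).1 (keyArc x).2 ≠ 0 := by
  rw [Ne, Nat.add_eq_zero_iff, not_and_or] at hx
  rcases keyArc.fst_eq_or_snd_eq x with hfst | hsnd
  · rw [← hfst] at hx
    refine hf.keyArc_ne_zero_of_outflow_ne_zero (hx.elim (fun hin => ?_) id)
    exact hf.outflow_ne_zero_of_inflow_ne_zero (keyArc.fst_ne_prime x _ _) hin
  · rw [← hsnd] at hx
    refine hf.keyArc_ne_zero_of_inflow_ne_zero (hx.elim id fun hout => ?_)
    exact hf.inflow_ne_zero_of_outflow_ne_zero (keyArc.snd_ne_plain x _ _) hout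

end IsMultiflow

lemma Finset.eq_zero_or_eq_zero_of_sum_le_one {ι : Type*} [Fintype ι] {g : ι → ℕ}
    (h : ∑ k, g k ≤ 1) {i j : ι} (hij : i ≠ j) : g i = 0 ∨ g j = 0 := by
  have := Finset.add_le_sum (f := g) (fun _ _ => Nat.zero_le _)
    (Finset.mem_univ i) (Finset.mem_univ j) hij
  omega

theorem stmt12_general {V : Type*} (G : SimpleGraph V)
    (T : ℕ) {n : ℕ} (xI xG : Fin n → V)
    (f : Fin n → TEV V → TEV V → ℕ) (hf : IsMultiflow G T xI xG f)
    (i j : Fin n) (hij : i ≠ j) (x : TEV V) :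
    ((∑ᶠ y, f i y x) + ∑ᶠ y, f i x y) = 0 ∨ ((∑ᶠ y, f j y x) + ∑ᶠ y, f j x y) = 0 := by
  by_contra! hboth
  obtain ⟨hi, hj⟩ := hboth
  rcases Finset.eq_zero_or_eq_zero_of_sum_le_one (hf.2.1 (keyArc x).1 (keyArc x).2) hij with
    h | h
  · exact hf.keyArc_ne_zero hi h
  · exact hf.keyArc_ne_zero hj h

/-- In the time-expanded network with its unit capacities, any two unit flows belonging to a
feasible integer multiflow are vertex-disjoint: for distinct commodities `i ≠ j`, there is no
vertex of the network through which both flows pass (the total flow of a commodity through a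
vertex being its inflow plus its outflow there). -/
theorem stmt12 {V : Type*} [Fintype V] [DecidableEq V] (G : SimpleGraph V)
    (T : ℕ) {n : ℕ} (xI xG : Fin n → V)
    (hI : Function.Injective xI) (hGoal : Function.Injective xG)
    (f : Fin n → TEV V → TEV V → ℕ) (hf : IsMultiflow G T xI xG f)
    (i j : Fin n) (hij : i ≠ j) (x : TEV V) :
    ((∑ᶠ y, f i y x) + ∑ᶠ y, f i x y) = 0 ∨ ((∑ᶠ y, f j y x) + ∑ᶠ y, f j x y) = 0 :=
  stmt12_general G T xI xG f hf i j hij x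
end

section
/- If a distance-optimal solution to an MPP instance exists at all, then one exists with makespan at most n·T_t, where T_t is the minimum makespan of the instance; i.e., the minimum total distance over all feasible solutions is attained by a solution whose makespan is at most n times the optimal makespan. -/
open scoped Classical in
/-- Total distance traveled by the robots (number of edge traversals). -/
noncomputable def totalDist {V : Type*} {n : ℕ} (p : Fin n → ℕ → V) (k : Fin n → ℕ) : ℕ :=
  ∑ i, ((Finset.range (k i)).filter fun t => p i t ≠ p i (t + 1)).card

namespace Nat

/-- The order embedding `ℕ ↪ ℕ` whose range misses `p`, as `Fin.succAbove`. -/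
def succAbove (p i : ℕ) : ℕ := if i < p then i else i + 1

/-- The monotone surjection `ℕ → ℕ` identifying `p` and `p + 1`, as `Fin.predAbove`. -/
def predAbove (p i : ℕ) : ℕ := if p < i then i - 1 else i

variable {p : ℕ}

lemma predAbove_le_iff {i j : ℕ} : predAbove p i ≤ j ↔ i ≤ succAbove p j := by
  unfold predAbove succAbove; split_ifs <;> omega

lemma predAbove_succAbove (i : ℕ) : predAbove p (succAbove p i) = i := by
  unfold predAbove succAbove; split_ifs <;> omega

lemma succAbove_predAbove {i : ℕ} (h : i ≠ p) : succAbove p (predAbove p i) = i := by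
  unfold predAbove succAbove; split_ifs <;> omega

lemma predAbove_mono : Monotone (predAbove p) := by
  intro i j hij; unfold predAbove; split_ifs <;> omega

lemma predAbove_lt_self {i : ℕ} (h : p < i) : predAbove p i < i := by
  unfold predAbove; rw [if_pos h]; omega

lemma predAbove_zero : predAbove p 0 = 0 := by
  simp [predAbove]

end Nat

open Nat (succAbove predAbove)

section IdleStep

variable {α : Type*} {f : ℕ → α} {t₀ : ℕ}

lemma apply_succAbove_succ (hf : f t₀ = f (t₀ + 1)) (s : ℕ) :
    f (succAbove t₀ (s + 1)) = f (succAbove t₀ s + 1) := by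
  by_cases hs : s + 1 = t₀
  · subst hs; simp [succAbove, hf]
  · unfold succAbove; congr 1; split_ifs <;> omega

lemma apply_succAbove_predAbove (hf : f t₀ = f (t₀ + 1)) (s : ℕ) :
    f (succAbove t₀ (predAbove t₀ s)) = f s := by
  rcases eq_or_ne s t₀ with rfl | hs
  · simp [succAbove, predAbove, hf]
  · rw [Nat.succAbove_predAbove hs]

open scoped Classical in
lemma card_moves_comp_succAbove (hf : f t₀ = f (t₀ + 1)) (K : ℕ) :
    ((Finset.range (predAbove t₀ K)).filter
        fun s => f (succAbove t₀ s) ≠ f (succAbove t₀ (s + 1))).card =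
      ((Finset.range K).filter fun t => f t ≠ f (t + 1)).card := by
  have hlt : ∀ {i j}, i < predAbove t₀ j ↔ succAbove t₀ i < j := by
    intro i j; simpa only [not_le] using Nat.predAbove_le_iff.not
  refine Finset.card_nbij' (succAbove t₀) (predAbove t₀) ?_ ?_ ?_ ?_
  · intro s hs
    simp only [Finset.coe_filter, Finset.mem_range, Set.mem_ofPred_eq] at hs ⊢
    exact ⟨hlt.1 hs.1, apply_succAbove_succ hf s ▸ hs.2⟩
  · intro t ht
    simp only [Finset.coe_filter, Finset.mem_range, Set.mem_ofPred_eq] at ht ⊢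
    have ht₀ : t ≠ t₀ := by rintro rfl; exact ht.2 hf
    rw [hlt, apply_succAbove_succ hf, Nat.succAbove_predAbove ht₀]
    exact ht
  · intro s _
    exact Nat.predAbove_succAbove s
  · intro t ht
    simp only [Finset.coe_filter, Finset.mem_range, Set.mem_ofPred_eq] at ht
    exact Nat.succAbove_predAbove (by rintro rfl; exact ht.2 hf)

end IdleStep

section Solutions

variable {V : Type*} {G : SimpleGraph V} {n : ℕ} {xI xG : Fin n → V}
  {p : Fin n → ℕ → V} {k : Fin n → ℕ}

lemma le_makespan (k : Fin n → ℕ) (i : Fin n) : k i ≤ makespan k :=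
  Finset.le_sup (Finset.mem_univ i)

open scoped Classical in
lemma totalDist_le_card_mul_makespan (p : Fin n → ℕ → V) (k : Fin n → ℕ) :
    totalDist p k ≤ n * makespan k := by
  calc totalDist p k ≤ ∑ _i : Fin n, makespan k := by
        refine Finset.sum_le_sum fun i _ => ?_
        exact (Finset.card_filter_le _ _).trans ((Finset.card_range _).trans_le (le_makespan k i))
    _ = n * makespan k := by simp

open scoped Classical in
lemma makespan_le_totalDist (hstay : ∀ i t, k i ≤ t → p i t = p i (t + 1))
    (hmove : ∀ t < makespan k, ∃ i, p i t ≠ p i (t + 1)) : makespan k ≤ totalDist p k := by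
  have hsub : Finset.range (makespan k) ⊆
      Finset.univ.biUnion fun i => (Finset.range (k i)).filter fun t => p i t ≠ p i (t + 1) := by
    intro t ht
    obtain ⟨i, hi⟩ := hmove t (Finset.mem_range.1 ht)
    have htk : t < k i := by
      by_contra! h
      exact hi (hstay i t h)
    simpa using ⟨i, htk, hi⟩
  calc makespan k = (Finset.range (makespan k)).card := (Finset.card_range _).symm
    _ ≤ _ := Finset.card_le_card hsub
    _ ≤ totalDist p k := Finset.card_biUnion_le

lemma Feasible.stay (hF : Feasible G xI xG p k) (i : Fin n) (t : ℕ) (ht : k i ≤ t) :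
    p i t = p i (t + 1) :=
  (hF.2.1 i t ht).trans (hF.2.1 i (t + 1) (by omega)).symm

lemma Feasible.comp_succAbove (hF : Feasible G xI xG p k) {t₀ : ℕ}
    (hidle : ∀ i, p i t₀ = p i (t₀ + 1)) :
    Feasible G xI xG (fun i => p i ∘ succAbove t₀) (fun i => predAbove t₀ (k i)) := by
  obtain ⟨hstart, hgoal, hmin, hstep, hvertex, hswap⟩ := hF
  refine ⟨fun i => ?_, fun i t ht => ?_, fun i t hall => ?_, fun i t => ?_, fun i j hij t => ?_,
    fun i j hij t => ?_⟩
  · simpa [Nat.predAbove_zero] using (apply_succAbove_predAbove (hidle i) 0).trans (hstart i)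
  · exact hgoal i _ (Nat.predAbove_le_iff.1 ht)
  · refine Nat.predAbove_le_iff.2 (hmin i _ fun s hs => ?_)
    rw [← apply_succAbove_predAbove (hidle i) s]
    exact hall _ ((Nat.predAbove_succAbove t).symm.trans_le (Nat.predAbove_mono hs))
  · simpa only [Function.comp_apply, apply_succAbove_succ (hidle i)] using hstep i (succAbove t₀ t)
  · exact hvertex i j hij _
  · simpa only [Function.comp_apply, apply_succAbove_succ (hidle i),
      apply_succAbove_succ (hidle j)] using hswap i j hij (succAbove t₀ t)

lemma totalDist_comp_succAbove {t₀ : ℕ} (hidle : ∀ i, p i t₀ = p i (t₀ + 1)) :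
    totalDist (fun i => p i ∘ succAbove t₀) (fun i => predAbove t₀ (k i)) = totalDist p k :=
  Finset.sum_congr rfl fun i _ => card_moves_comp_succAbove (hidle i) (k i)

lemma makespan_predAbove_lt {t₀ : ℕ} (ht₀ : t₀ < makespan k) :
    makespan (fun i => predAbove t₀ (k i)) < makespan k :=
  (Finset.sup_le fun i _ => Nat.predAbove_mono (le_makespan k i)).trans_lt
    (Nat.predAbove_lt_self ht₀)

theorem Feasible.exists_makespan_le_totalDist (hF : Feasible G xI xG p k) :
    ∃ p' k', Feasible G xI xG p' k' ∧ totalDist p' k' = totalDist p k ∧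
      makespan k' ≤ totalDist p k := by
  induction hT : makespan k using Nat.strong_induction_on generalizing p k with
  | _ T ih =>
    by_cases hle : makespan k ≤ totalDist p k
    · exact ⟨p, k, hF, rfl, hle⟩
    obtain ⟨t₀, ht₀, hidle⟩ : ∃ t₀ < makespan k, ∀ i, p i t₀ = p i (t₀ + 1) := by
      by_contra! h
      exact hle (makespan_le_totalDist hF.stay h)
    obtain ⟨p', k', hF', hdist, hmake⟩ :=
      ih _ (hT ▸ makespan_predAbove_lt ht₀) (hF.comp_succAbove hidle) rfl
    rw [totalDist_comp_succAbove hidle] at hdist hmake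
    exact ⟨p', k', hF', hdist, hmake⟩

theorem exists_feasible_totalDist_le (h : ∃ p k, Feasible G xI xG p k) :
    ∃ p k, Feasible G xI xG p k ∧ ∀ q m, Feasible G xI xG q m → totalDist p k ≤ totalDist q m := by
  obtain ⟨p₀, k₀, hF₀⟩ := h
  obtain ⟨⟨p, k⟩, hF, hmin⟩ := (measure fun x : (Fin n → ℕ → V) × (Fin n → ℕ) =>
    totalDist x.1 x.2).wf.has_min {x | Feasible G xI xG x.1 x.2} ⟨(p₀, k₀), hF₀⟩
  exact ⟨p, k, hF, fun q m hq => not_lt.1 (hmin (q, m) hq)⟩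

end Solutions

theorem stmt16_general {V : Type*} (G : SimpleGraph V) {n : ℕ} (xI xG : Fin n → V)
    (Tt : ℕ)
    (hTt : IsLeast {T | ∃ p k, Feasible G xI xG p k ∧ makespan k = T} Tt) :
    ∃ p k, Feasible G xI xG p k ∧ makespan k ≤ n * Tt ∧
      ∀ q m, Feasible G xI xG q m → totalDist p k ≤ totalDist q m := by
  obtain ⟨⟨p₀, k₀, hF₀, rfl⟩, -⟩ := hTt
  obtain ⟨p, k, hF, hmin⟩ := exists_feasible_totalDist_le ⟨p₀, k₀, hF₀⟩
  obtain ⟨p', k', hF', hdist, hmake⟩ := hF.exists_makespan_le_totalDist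
  refine ⟨p', k', hF', ?_, fun q m hq => hdist ▸ hmin q m hq⟩
  calc makespan k' ≤ totalDist p k := hmake
    _ ≤ totalDist p₀ k₀ := hmin p₀ k₀ hF₀
    _ ≤ n * makespan k₀ := totalDist_le_card_mul_makespan p₀ k₀

/-- If `T_t` is the minimum makespan of a (solvable) MPP instance, then the minimum total
distance over all feasible solutions is attained by a feasible solution whose makespan is at
most `n · T_t`. -/
theorem stmt16 {V : Type*} [Fintype V] (G : SimpleGraph V) {n : ℕ} (xI xG : Fin n → V)
    (hI : Function.Injective xI) (hGoal : Function.Injective xG) (Tt : ℕ)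
    (hTt : IsLeast {T | ∃ p k, Feasible G xI xG p k ∧ makespan k = T} Tt) :
    ∃ p k, Feasible G xI xG p k ∧ makespan k ≤ n * Tt ∧
      ∀ q m, Feasible G xI xG q m → totalDist p k ≤ totalDist q m :=
  stmt16_general G xI xG Tt hTt
end
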